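/- arXiv:2108.04588 — 3 statements merged into one kernel-verified Lean document; each statement's English description precedes it below -/
import Mathlib

section
/- Let X^n be a sequence of non-empty compact convex subsets of ℝ² converging in Hausdorff distance to a non-empty compact set X*. Let p ∈ ℝ² and r > 0 be such that dist(p, X^n) ≤ r for every n. Then X* ∩ B(p,r) is non-empty and the sequence X^n ∩ B(p,r) converges to X* ∩ B(p,r) in Hausdorff distance, where B(p,r) denotes the closed ball of radius r centered at p. -/
/-!
Hausdorff limits of convex sets are convex, and `X*` meets `B(p, r)` because `infDist p` is
1-Lipschitz for the Hausdorff distance. The key estimate concerns two convex compacta `A`, `B`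
at Hausdorff distance `δ`, both meeting `B(p, r)`. A point of `A ∩ B(p, r)` is `δ`-close to
some `y ∈ B` with `dist y p ≤ r + δ`, and moving `y` towards a point `q ∈ B ∩ B(p, r)` by at
most `√(δ (2r + δ))` lands in the ball, by the identity
`‖(1-t)a + tb‖² = (1-t)‖a‖² + t‖b‖² - t(1-t)‖a-b‖²`. Hence
`d_H(A ∩ B(p, r), B ∩ B(p, r)) ≤ δ + √(δ (2r + δ))`, which tends to `0` with `δ`.
-/

open Metric Filter Set

section Metric

variable {α : Type*} [PseudoMetricSpace α]

theorem IsCompact.exists_dist_le_hausdorffDist {s t : Set α} (ht : IsCompact t)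
    (hfin : hausdorffEDist s t ≠ ⊤) {x : α} (hx : x ∈ s) :
    ∃ y ∈ t, dist x y ≤ hausdorffDist s t := by
  obtain ⟨y, hy, hxy⟩ :=
    ht.exists_infDist_eq_dist (nonempty_of_hausdorffEDist_ne_top ⟨x, hx⟩ hfin) x
  exact ⟨y, hy, hxy ▸ infDist_le_hausdorffDist_of_mem hx hfin⟩

theorem IsCompact.inter_closedBall_nonempty_of_infDist_le {s : Set α} (hs : IsCompact s)
    (hne : s.Nonempty) {x : α} {r : ℝ} (h : infDist x s ≤ r) :
    (s ∩ closedBall x r).Nonempty := by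
  obtain ⟨y, hy, hxy⟩ := hs.exists_infDist_eq_dist hne x
  exact ⟨y, hy, mem_closedBall'.2 (hxy ▸ h)⟩

theorem infDist_le_of_tendsto_hausdorffDist {ι : Type*} {l : Filter ι} [l.NeBot]
    {X : ι → Set α} {Y : Set α} {x : α} {r : ℝ} (hfin : ∀ i, hausdorffEDist (X i) Y ≠ ⊤)
    (hlim : Tendsto (fun i => hausdorffDist (X i) Y) l (nhds 0))
    (hr : ∀ i, infDist x (X i) ≤ r) : infDist x Y ≤ r := by
  have hlim' : Tendsto (fun i => r + hausdorffDist (X i) Y) l (nhds r) := by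
    simpa using hlim.const_add r
  refine ge_of_tendsto hlim' (Eventually.of_forall fun i => ?_)
  linarith [infDist_le_infDist_add_hausdorffDist (x := x) (hfin i), hr i]

end Metric

section NormedSpace

variable {F : Type*} [NormedAddCommGroup F] [NormedSpace ℝ F]

theorem IsClosed.convex_of_forall_subset_thickening {s : Set F} (hs : IsClosed s)
    (h : ∀ δ > 0, ∃ C : Set F, Convex ℝ C ∧ s ⊆ thickening δ C ∧ C ⊆ thickening δ s) :
    Convex ℝ s := by
  intro x hx y hy a b ha hb hab
  rw [← hs.closure_eq, closure_eq_iInter_thickening, mem_iInter₂]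
  intro δ hδ
  obtain ⟨C, hC, hsC, hCs⟩ := h (δ / 2) (half_pos hδ)
  have hmem : a • x + b • y ∈ thickening (δ / 2) (thickening (δ / 2) s) :=
    thickening_subset_of_subset _ hCs ((hC.thickening _) (hsC hx) (hsC hy) ha hb hab)
  simpa using thickening_thickening_subset _ _ _ hmem

theorem convex_of_tendsto_hausdorffDist {ι : Type*} {l : Filter ι} [l.NeBot]
    {X : ι → Set F} {Y : Set F} (hX : ∀ i, Convex ℝ (X i)) (hY : IsClosed Y)
    (hfin : ∀ i, hausdorffEDist (X i) Y ≠ ⊤)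
    (hlim : Tendsto (fun i => hausdorffDist (X i) Y) l (nhds 0)) : Convex ℝ Y := by
  refine hY.convex_of_forall_subset_thickening fun δ hδ => ?_
  obtain ⟨i, hi⟩ := ((tendsto_order.1 hlim).2 δ hδ).exists
  refine ⟨X i, hX i, fun y hy => mem_thickening_iff.2 ?_, fun x hx => mem_thickening_iff.2 ?_⟩
  · obtain ⟨x, hx, hxy⟩ := exists_dist_lt_of_hausdorffDist_lt' hy hi (hfin i)
    exact ⟨x, hx, dist_comm x y ▸ hxy⟩
  · exact exists_dist_lt_of_hausdorffDist_lt hx hi (hfin i)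

end NormedSpace

section InnerProductSpace

variable {E : Type*} [NormedAddCommGroup E] [InnerProductSpace ℝ E]

theorem norm_one_sub_smul_add_smul_sq (a b : E) (t : ℝ) :
    ‖(1 - t) • a + t • b‖ ^ 2 = (1 - t) * ‖a‖ ^ 2 + t * ‖b‖ ^ 2 - t * (1 - t) * ‖a - b‖ ^ 2 := by
  rw [norm_add_sq_real, norm_sub_sq_real, norm_smul, norm_smul, inner_smul_left, inner_smul_right,
    Real.norm_eq_abs, Real.norm_eq_abs, mul_pow, mul_pow, sq_abs, sq_abs]
  simp only [conj_trivial]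
  ring

theorem Convex.exists_mem_inter_closedBall_dist_le_sqrt {C : Set E} (hC : Convex ℝ C)
    {p q x : E} {r δ : ℝ} (hδ : 0 ≤ δ) (hq : q ∈ C ∩ closedBall p r) (hx : x ∈ C)
    (hxp : dist x p ≤ r + δ) :
    ∃ x' ∈ C ∩ closedBall p r, dist x x' ≤ √(δ * (2 * r + δ)) := by
  obtain ⟨hqC, hqp⟩ := hq
  rw [mem_closedBall] at hqp
  have hr : 0 ≤ r := dist_nonneg.trans hqp
  set s := δ * (2 * r + δ)
  have hs : 0 ≤ s := by positivity
  set d := dist x q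
  by_cases hd : d ≤ √s
  · exact ⟨q, ⟨hqC, hqp⟩, hd⟩
  rw [not_le] at hd
  have hd0 : 0 < d := (Real.sqrt_nonneg s).trans_lt hd
  have hsd : s < d ^ 2 := (Real.sqrt_lt' hd0).1 hd
  -- with `t * d ^ 2 = s` the squared-norm identity bounds the new distance to `p` by `r ^ 2`
  set t := s / d ^ 2
  have htd : t * d ^ 2 = s := div_mul_cancel₀ s (by positivity)
  have ht0 : 0 ≤ t := by positivity
  have ht1 : t ≤ 1 := (div_le_one (by positivity)).2 hsd.le
  refine ⟨(1 - t) • x + t • q, ⟨hC hx hqC (by linarith) ht0 (by ring), ?_⟩, ?_⟩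
  · have hnorm : ‖(1 - t) • (x - p) + t • (q - p)‖ ^ 2 ≤ r ^ 2 := by
      rw [norm_one_sub_smul_add_smul_sq, sub_sub_sub_cancel_right, ← dist_eq_norm,
        ← dist_eq_norm, ← dist_eq_norm]
      have e1 : (1 - t) * dist x p ^ 2 ≤ (1 - t) * (r + δ) ^ 2 := by gcongr
      have e2 : t * dist q p ^ 2 ≤ t * r ^ 2 := by gcongr
      have e3 : t * (1 - t) * d ^ 2 = (1 - t) * s := by rw [← htd]; ring
      nlinarith
    rw [mem_closedBall, dist_eq_norm,
      show (1 - t) • x + t • q - p = (1 - t) • (x - p) + t • (q - p) by module]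
    exact (pow_le_pow_iff_left₀ (norm_nonneg _) hr two_ne_zero).1 hnorm
  · calc dist x ((1 - t) • x + t • q) = t * d := by
          rw [dist_eq_norm, show x - ((1 - t) • x + t • q) = t • (x - q) by module,
            norm_smul_of_nonneg ht0, ← dist_eq_norm]
      _ = s / d := by rw [div_mul_eq_mul_div, sq, mul_div_mul_right _ _ hd0.ne']
      _ ≤ √s := by
          rw [div_le_iff₀ hd0]
          calc s = √s * √s := (Real.mul_self_sqrt hs).symm
            _ ≤ √s * d := by gcongr

theorem Convex.exists_mem_inter_closedBall_dist_le {A : Set E} (hA : Convex ℝ A) {p x y : E}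
    {r δ : ℝ} (hAp : (A ∩ closedBall p r).Nonempty) (hx : x ∈ closedBall p r) (hy : y ∈ A)
    (hxy : dist x y ≤ δ) :
    ∃ y' ∈ A ∩ closedBall p r, dist x y' ≤ δ + √(δ * (2 * r + δ)) := by
  obtain ⟨q, hq⟩ := hAp
  have hyp : dist y p ≤ r + δ := by
    linarith [dist_triangle y x p, dist_comm x y, mem_closedBall.1 hx]
  obtain ⟨y', hy', hyy'⟩ :=
    hA.exists_mem_inter_closedBall_dist_le_sqrt (dist_nonneg.trans hxy) hq hy hyp
  exact ⟨y', hy', (dist_triangle x y y').trans (add_le_add hxy hyy')⟩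

theorem Convex.hausdorffDist_inter_closedBall_le {A B : Set E} (hA : Convex ℝ A)
    (hB : Convex ℝ B) (hAc : IsCompact A) (hBc : IsCompact B) {p : E} {r : ℝ}
    (hAp : (A ∩ closedBall p r).Nonempty) (hBp : (B ∩ closedBall p r).Nonempty) :
    hausdorffDist (A ∩ closedBall p r) (B ∩ closedBall p r) ≤
      hausdorffDist A B + √(hausdorffDist A B * (2 * r + hausdorffDist A B)) := by
  have hfin : hausdorffEDist A B ≠ ⊤ := hausdorffEDist_ne_top_of_nonempty_of_bounded
    (hAp.mono inter_subset_left) (hBp.mono inter_subset_left) hAc.isBounded hBc.isBounded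
  apply hausdorffDist_le_of_mem_dist (add_nonneg hausdorffDist_nonneg (Real.sqrt_nonneg _))
  · rintro x ⟨hxA, hxp⟩
    obtain ⟨y, hyB, hxy⟩ := hBc.exists_dist_le_hausdorffDist hfin hxA
    exact hB.exists_mem_inter_closedBall_dist_le hBp hxp hyB hxy
  · rintro y ⟨hyB, hyp⟩
    rw [hausdorffEDist_comm] at hfin
    obtain ⟨x, hxA, hyx⟩ := hAc.exists_dist_le_hausdorffDist hfin hyB
    rw [hausdorffDist_comm] at hyx
    exact hA.exists_mem_inter_closedBall_dist_le hAp hyp hxA hyx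

end InnerProductSpace

theorem stmt_0_general (X : ℕ → Set ℂ) (Xs : Set ℂ)
    (hne : ∀ n, (X n).Nonempty) (hcpt : ∀ n, IsCompact (X n))
    (hconv : ∀ n, Convex ℝ (X n))
    (hXsne : Xs.Nonempty) (hXsc : IsCompact Xs)
    (hlim : Tendsto (fun n => hausdorffDist (X n) Xs) atTop (nhds 0))
    (p : ℂ) (r : ℝ) (hb : ∀ n, infDist p (X n) ≤ r) :
    (Xs ∩ closedBall p r).Nonempty ∧
      Tendsto (fun n => hausdorffDist (X n ∩ closedBall p r) (Xs ∩ closedBall p r))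
        atTop (nhds 0) := by
  have hfin : ∀ n, hausdorffEDist (X n) Xs ≠ ⊤ := fun n =>
    hausdorffEDist_ne_top_of_nonempty_of_bounded (hne n) hXsne (hcpt n).isBounded
      hXsc.isBounded
  have hXsconv : Convex ℝ Xs := convex_of_tendsto_hausdorffDist hconv hXsc.isClosed hfin hlim
  have hXsp : (Xs ∩ closedBall p r).Nonempty := hXsc.inter_closedBall_nonempty_of_infDist_le
    hXsne (infDist_le_of_tendsto_hausdorffDist hfin hlim hb)
  have hXp : ∀ n, (X n ∩ closedBall p r).Nonempty := fun n =>
    (hcpt n).inter_closedBall_nonempty_of_infDist_le (hne n) (hb n)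
  refine ⟨hXsp, squeeze_zero (fun n => hausdorffDist_nonneg) (fun n =>
    (hconv n).hausdorffDist_inter_closedBall_le hXsconv (hcpt n) hXsc (hXp n) hXsp) ?_⟩
  have hbound : Continuous fun d : ℝ => d + √(d * (2 * r + d)) := by fun_prop
  simpa [Function.comp_def] using (hbound.tendsto 0).comp hlim

theorem stmt_0 (X : ℕ → Set ℂ) (Xs : Set ℂ)
    (hne : ∀ n, (X n).Nonempty) (hcpt : ∀ n, IsCompact (X n))
    (hconv : ∀ n, Convex ℝ (X n))
    (hXsne : Xs.Nonempty) (hXsc : IsCompact Xs)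
    (hlim : Tendsto (fun n => hausdorffDist (X n) Xs) atTop (nhds 0))
    (p : ℂ) (r : ℝ) (hr : 0 < r) (hb : ∀ n, infDist p (X n) ≤ r) :
    (Xs ∩ closedBall p r).Nonempty ∧
      Tendsto (fun n => hausdorffDist (X n ∩ closedBall p r) (Xs ∩ closedBall p r))
        atTop (nhds 0) :=
  stmt_0_general X Xs hne hcpt hconv hXsne hXsc hlim p r hb
end

section
/- Let A be a convex disk in ℝ², let U be a similarity of A with radius r₀ > 0, and let ρ > 0. Let D = {p ∈ ℝ² : dist(p, U) ≤ ρ·diam(A)}. If V₁, …, V_n are pairwise disjoint similarities of A, each of radius at least ρ and each intersecting U, then n ≤ area(D) / (ρ² · area(A)). -/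
open Metric Filter Set MeasureTheory

/-- A convex disk: a compact convex subset of the plane with non-empty interior. -/
def IsConvexDisk (A : Set ℂ) : Prop :=
  Convex ℝ A ∧ IsCompact A ∧ (interior A).Nonempty

/-- A similarity of `A` with radius `r`: a rotated, scaled (by `r`) and translated copy. -/
def IsSimilarityOf (r : ℝ) (A X : Set ℂ) : Prop :=
  0 < r ∧ ∃ w z : ℂ, ‖w‖ = r ∧ X = (fun a => w * a + z) '' A

/-!
Shrink each `V i` by the homothety of ratio `ρ / rᵢ` centred at a point `x ∈ V i ∩ U`. The result
is a similarity of `A` of radius `ρ`, so it has area `ρ² · area A`; it stays inside `V i` by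
convexity, and inside the closed ball of radius `ρ · diam A` around `x ∈ U`, hence inside `D`.
The shrunken copies are disjoint subsets of `D`, which has finite area because `U` is bounded.
-/

lemma volume_image_mul_add (w z : ℂ) (A : Set ℂ) :
    volume ((fun a => w * a + z) '' A) = ENNReal.ofReal (‖w‖ ^ 2) * volume A := by
  have h_comp : (fun a => w * a + z) '' A = (fun b => b + z) '' (Algebra.lmul ℝ ℂ w '' A) := by
    rw [image_image]; rfl
  have h_det : LinearMap.det (Algebra.lmul ℝ ℂ w) = Complex.normSq w := by
    rw [← Algebra.norm_apply, Algebra.norm_complex_apply]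
  rw [h_comp, image_add_right, measure_preimage_add_right, Measure.addHaar_image_linearMap,
    h_det, abs_of_nonneg (Complex.normSq_nonneg w), Complex.sq_norm]

lemma dist_mul_add_mul_add (w z a b : ℂ) : dist (w * a + z) (w * b + z) = ‖w‖ * dist a b := by
  rw [dist_eq_norm, dist_eq_norm, ← norm_mul, mul_sub, add_sub_add_right_eq_sub]

lemma Convex.image_mul_add {A : Set ℂ} (hA : Convex ℝ A) (w z : ℂ) :
    Convex ℝ ((fun a => w * a + z) '' A) :=
  hA.affine_image ((Algebra.lmul ℝ ℂ w).toAffineMap + AffineMap.const ℝ ℂ z)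

lemma setOf_infDist_le_subset_cthickening {α : Type*} [PseudoMetricSpace α] {U : Set α}
    (hU : U.Nonempty) {δ : ℝ} (hδ : 0 ≤ δ) : {p | infDist p U ≤ δ} ⊆ cthickening δ U := fun _ hp =>
  mem_cthickening_iff.2 <| (ENNReal.le_ofReal_iff_toReal_le (infEDist_ne_top hU) hδ).2 hp

lemma card_mul_le_measure_of_pairwise_disjoint {ι α : Type*} [Fintype ι] [MeasurableSpace α]
    {μ : Measure α} {s : ι → Set α} {D : Set α} {m : ENNReal}
    (hs_disj : Pairwise (Function.onFun Disjoint s)) (hs_meas : ∀ i, MeasurableSet (s i))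
    (hs_subset : ∀ i, s i ⊆ D) (hm : ∀ i, m ≤ μ (s i)) :
    Fintype.card ι * m ≤ μ D :=
  calc Fintype.card ι * m = ∑ _ : ι, m := by simp
    _ ≤ ∑ i, μ (s i) := Finset.sum_le_sum fun i _ => hm i
    _ = μ (⋃ i, s i) := by rw [measure_iUnion hs_disj hs_meas, tsum_fintype]
    _ ≤ μ D := measure_mono (iUnion_subset hs_subset)

namespace IsSimilarityOf

variable {r : ℝ} {A X : Set ℂ}

lemma isCompact (hX : IsSimilarityOf r A X) (hA : IsCompact A) : IsCompact X := by
  obtain ⟨-, w, z, -, rfl⟩ := hX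
  exact hA.image (by fun_prop)

lemma nonempty (hX : IsSimilarityOf r A X) (hA : A.Nonempty) : X.Nonempty := by
  obtain ⟨-, w, z, -, rfl⟩ := hX
  exact hA.image _

theorem ofReal_sq_mul_volume_le_volume_inter (hX : IsSimilarityOf r A X) (hA : Convex ℝ A)
    (hAb : Bornology.IsBounded A) {U : Set ℂ} (hXU : (X ∩ U).Nonempty) {ρ : ℝ} (hρ : 0 < ρ)
    (hρr : ρ ≤ r) :
    ENNReal.ofReal (ρ ^ 2) * volume A ≤ volume (X ∩ {p | infDist p U ≤ ρ * diam A}) := by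
  obtain ⟨hr, w, z, hw, rfl⟩ := hX
  obtain ⟨x, ⟨b, hb, rfl⟩, hxU⟩ := hXU
  set c : ℝ := ρ / r
  have hc : c ∈ Icc (0 : ℝ) 1 := ⟨by positivity, (div_le_one hr).2 hρr⟩
  have hcr : c * r = ρ := div_mul_cancel₀ ρ hr.ne'
  set W := AffineMap.homothety (w * b + z) c '' ((fun a => w * a + z) '' A)
  have hW_subset : W ⊆ (fun a => w * a + z) '' A := by
    rintro _ ⟨v, hv, rfl⟩
    rw [AffineMap.homothety_eq_lineMap]
    exact (hA.image_mul_add w z).lineMap_mem (mem_image_of_mem _ hb) hv hc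
  have hW_near : W ⊆ {p | infDist p U ≤ ρ * diam A} := by
    rintro _ ⟨_, ⟨a, ha, rfl⟩, rfl⟩
    refine (infDist_le_dist_of_mem hxU).trans ?_
    calc dist (AffineMap.homothety (w * b + z) c (w * a + z)) (w * b + z)
        = c * (r * dist b a) := by
          rw [dist_homothety_center, dist_mul_add_mul_add, Real.norm_of_nonneg hc.1, hw]
      _ ≤ c * (r * diam A) := by gcongr; exact dist_le_diam_of_mem hAb hb ha
      _ = ρ * diam A := by rw [← mul_assoc, hcr]
  have hW_volume : volume W = ENNReal.ofReal (ρ ^ 2) * volume A := by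
    rw [Measure.addHaar_image_homothety, volume_image_mul_add, Complex.finrank_real_complex, hw,
      ← mul_assoc, ← ENNReal.ofReal_mul (abs_nonneg _), abs_of_nonneg (by positivity), ← mul_pow,
      hcr]
  rw [← hW_volume]
  exact measure_mono (subset_inter hW_subset hW_near)

end IsSimilarityOf

theorem stmt_4 (A U : Set ℂ) (hA : IsConvexDisk A) (r₀ ρ : ℝ) (hρ : 0 < ρ)
    (hU : IsSimilarityOf r₀ A U)
    (n : ℕ) (V : Fin n → Set ℂ) (rv : Fin n → ℝ)
    (hV : ∀ i, IsSimilarityOf (rv i) A (V i)) (hrv : ∀ i, ρ ≤ rv i)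
    (hint : ∀ i, (V i ∩ U).Nonempty)
    (hdisj : ∀ i j, i ≠ j → Disjoint (V i) (V j)) :
    (n : ℝ) ≤ (volume {p : ℂ | infDist p U ≤ ρ * Metric.diam A}).toReal /
      (ρ ^ 2 * (volume A).toReal) := by
  obtain ⟨hA_convex, hA_compact, hA_interior⟩ := hA
  set D := {p : ℂ | infDist p U ≤ ρ * diam A}
  have hD_measurable : MeasurableSet D :=
    (isClosed_le (continuous_infDist_pt U) continuous_const).measurableSet
  have hD_finite : volume D ≠ ⊤ := by
    have hD_subset := setOf_infDist_le_subset_cthickening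
      (hU.nonempty (hA_interior.mono interior_subset)) (by positivity : 0 ≤ ρ * diam A)
    exact ((measure_mono hD_subset).trans_lt
      (hU.isCompact hA_compact).isBounded.cthickening.measure_lt_top).ne
  have hcount : (n : ENNReal) * (ENNReal.ofReal (ρ ^ 2) * volume A) ≤ volume D := by
    simpa using card_mul_le_measure_of_pairwise_disjoint
      (fun i j hij => (hdisj i j hij).mono inter_subset_left inter_subset_left)
      (fun i => ((hV i).isCompact hA_compact).measurableSet.inter hD_measurable)
      (fun _ => inter_subset_right) fun i =>
        (hV i).ofReal_sq_mul_volume_le_volume_inter hA_convex hA_compact.isBounded (hint i) hρ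
          (hrv i)
  have hA_volume : 0 < (volume A).toReal :=
    ENNReal.toReal_pos (Measure.measure_pos_of_nonempty_interior _ hA_interior).ne'
      hA_compact.measure_lt_top.ne
  rw [le_div_iff₀ (by positivity)]
  simpa [ENNReal.toReal_mul, ENNReal.toReal_ofReal (sq_nonneg ρ)] using
    ENNReal.toReal_mono hD_finite hcount
end

section
/- Let A be a convex disk. For every ε' > 0, there exists n₀ ∈ ℕ such that for all n ≥ n₀: whenever U₁, U₂, V₁, …, V_n are similarities of A such that each V_i intersects both U₁ and U₂ and V₁, …, V_n are pairwise disjoint, then dist(U₁, U₂) < ε' · min{r(U₁), r(U₂)}. -/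
open Metric Filter Set

/-- The distance between two sets: the infimum of pairwise distances. -/
noncomputable def setDist (X Y : Set ℂ) : ℝ := sInf (Set.image2 dist X Y)

/-!
Suppose `setDist U₁ U₂ ≥ ε' r` where `r = r(U₁) ≤ r(U₂)`. Every `V i` meets both sets, so its
diameter `r(V i) · diam A` is at least `ε' r`. Shrinking `V i` by convexity towards a point of
`V i ∩ U₁` gives a copy of radius `τ r = ε' r / diam A` inside `V i`; it contains a ball of radius
`ρ τ r` (where `A` contains a ball of radius `ρ`) whose centre is within `O(r)` of `U₁`. These balls
are pairwise disjoint, so comparing areas bounds `n` by a constant depending only on `A` and `ε'`.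
-/

open Function MeasureTheory Module

lemma setDist_le_dist {X Y : Set ℂ} {p q : ℂ} (hp : p ∈ X) (hq : q ∈ Y) :
    setDist X Y ≤ dist p q :=
  csInf_le ⟨0, by rintro _ ⟨a, -, b, -, rfl⟩; exact dist_nonneg⟩ ⟨p, hp, q, hq, rfl⟩

theorem Convex.ball_lineMap_subset {E : Type*} [NormedAddCommGroup E] [NormedSpace ℝ E]
    {S : Set E} (hS : Convex ℝ S) {x c : E} {ρ t : ℝ} (hx : x ∈ S) (hball : ball c ρ ⊆ S)
    (ht₀ : 0 < t) (ht₁ : t ≤ 1) : ball (AffineMap.lineMap x c t) (t * ρ) ⊆ S := by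
  intro y hy
  set v := x + t⁻¹ • (y - x)
  have hv : v ∈ ball c ρ := by
    have : v - c = t⁻¹ • (y - AffineMap.lineMap x c t) := by
      simp only [v, AffineMap.lineMap_apply_module', smul_sub, smul_add, smul_smul,
        inv_mul_cancel₀ ht₀.ne', one_smul]
      abel
    rw [mem_ball, dist_eq_norm, this, norm_smul, Real.norm_eq_abs, abs_inv, abs_of_pos ht₀,
      inv_mul_lt_iff₀ ht₀, ← dist_eq_norm]
    exact hy
  have hy : y = AffineMap.lineMap x v t := by
    simp only [v, AffineMap.lineMap_apply_module', add_sub_cancel_left, smul_smul,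
      mul_inv_cancel₀ ht₀.ne', one_smul, sub_add_cancel]
  rw [hy]
  exact hS.lineMap_mem hx (hball hv) ⟨ht₀.le, ht₁⟩

theorem card_le_of_pairwise_disjoint_ball {E : Type*} [NormedAddCommGroup E] [NormedSpace ℝ E]
    [FiniteDimensional ℝ E] {ι : Type*} [Fintype ι] {c : ι → E} {u : E} {R s : ℝ}
    (hR : 0 ≤ R) (hs : 0 < s) (hc : ∀ i, dist (c i) u ≤ R)
    (hd : Pairwise (Disjoint on fun i => ball (c i) s)) :
    (Fintype.card ι : ℝ) ≤ ((R + s) / s) ^ finrank ℝ E := by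
  borelize E
  set μ : Measure E := Measure.addHaar
  have hsub : (⋃ i, ball (c i) s) ⊆ ball u (R + s) := by
    refine iUnion_subset fun i y hy => ?_
    rw [mem_ball] at hy ⊢
    linarith [dist_triangle y (c i) u, hc i]
  have hvol : (Fintype.card ι : ENNReal) * ENNReal.ofReal (s ^ finrank ℝ E) * μ (ball 0 1)
      ≤ ENNReal.ofReal ((R + s) ^ finrank ℝ E) * μ (ball 0 1) := by
    calc _ = μ (⋃ i, ball (c i) s) := by
          rw [measure_iUnion hd fun i => measurableSet_ball, tsum_fintype]
          simp [Measure.addHaar_ball_of_pos μ _ hs, Finset.sum_const, mul_assoc]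
      _ ≤ μ (ball u (R + s)) := measure_mono hsub
      _ = _ := Measure.addHaar_ball_of_pos μ _ (by linarith)
  have hcancel := (ENNReal.mul_le_mul_iff_left (measure_ball_pos μ 0 one_pos).ne'
    measure_ball_lt_top.ne).mp hvol
  rw [← ENNReal.ofReal_natCast, ← ENNReal.ofReal_mul (by positivity),
    ENNReal.ofReal_le_ofReal_iff (by positivity)] at hcancel
  rwa [div_pow, le_div_iff₀ (by positivity)]

theorem IsConvexDisk.exists_ball_subset {A : Set ℂ} (hA : IsConvexDisk A) :
    ∃ a₀ : ℂ, ∃ ρ > 0, ball a₀ ρ ⊆ A := by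
  obtain ⟨a₀, ha₀⟩ := hA.2.2
  obtain ⟨ρ, hρ, hball⟩ := Metric.isOpen_iff.mp isOpen_interior a₀ ha₀
  exact ⟨a₀, ρ, hρ, hball.trans interior_subset⟩

theorem IsConvexDisk.diam_pos {A : Set ℂ} (hA : IsConvexDisk A) : 0 < diam A := by
  obtain ⟨a₀, ha₀⟩ := hA.2.2
  have hinf := infinite_of_mem_nhds a₀ (mem_interior_iff_mem_nhds.mp ha₀)
  exact Metric.diam_pos hinf.nontrivial hA.2.1.isBounded

namespace IsSimilarityOf

variable {r : ℝ} {A X : Set ℂ}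

theorem convex (h : IsSimilarityOf r A X) (hA : Convex ℝ A) : Convex ℝ X := by
  obtain ⟨-, w, z, -, rfl⟩ := h
  have hlin : IsLinearMap ℝ (fun a : ℂ => w * a) :=
    ⟨fun a b => mul_add w a b, fun t a => mul_smul_comm t w a⟩
  simpa only [image_image, add_comm _ z] using (hA.is_linear_image hlin).translate z

theorem dist_le (h : IsSimilarityOf r A X) (hA : Bornology.IsBounded A) {p q : ℂ}
    (hp : p ∈ X) (hq : q ∈ X) : dist p q ≤ r * diam A := by
  obtain ⟨hr, w, z, hw, rfl⟩ := h
  obtain ⟨a, ha, rfl⟩ := hp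
  obtain ⟨b, hb, rfl⟩ := hq
  rw [dist_add_right, dist_eq_norm, ← mul_sub, norm_mul, hw, ← dist_eq_norm]
  exact mul_le_mul_of_nonneg_left (dist_le_diam_of_mem hA ha hb) hr.le

theorem exists_ball_subset (h : IsSimilarityOf r A X) {a₀ : ℂ} {ρ : ℝ}
    (hball : ball a₀ ρ ⊆ A) : ∃ c, ball c (ρ * r) ⊆ X := by
  obtain ⟨hr, w, z, hw, rfl⟩ := h
  have hw₀ : w ≠ 0 := norm_pos_iff.mp (hw ▸ hr)
  refine ⟨w * a₀ + z, fun v hv => ⟨(v - z) / w, hball ?_, by field_simp; ring⟩⟩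
  have : (v - z) / w - a₀ = (v - (w * a₀ + z)) / w := by field_simp; ring
  rw [mem_ball, dist_eq_norm, this, norm_div, hw, div_lt_iff₀ hr, ← dist_eq_norm]
  exact hv

theorem exists_ball_subset_near (h : IsSimilarityOf r A X) (hconv : Convex ℝ A)
    (hbdd : Bornology.IsBounded A) {a₀ : ℂ} {ρ : ℝ} (hρ : 0 < ρ) (hball : ball a₀ ρ ⊆ A)
    {x : ℂ} (hx : x ∈ X) {t : ℝ} (ht₀ : 0 < t) (htr : t ≤ r) :
    ∃ c, ball c (ρ * t) ⊆ X ∧ dist c x ≤ t * diam A := by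
  have hr := h.1
  obtain ⟨c₀, hc₀⟩ := h.exists_ball_subset hball
  have hq : 0 < t / r := div_pos ht₀ hr
  refine ⟨AffineMap.lineMap x c₀ (t / r), ?_, ?_⟩
  · have := (h.convex hconv).ball_lineMap_subset hx hc₀ hq ((div_le_one hr).mpr htr)
    rwa [show t / r * (ρ * r) = ρ * t by field_simp] at this
  · rw [dist_lineMap_left, Real.norm_of_nonneg hq.le]
    calc t / r * dist x c₀ ≤ t / r * (r * diam A) :=
          mul_le_mul_of_nonneg_left (h.dist_le hbdd hx (hc₀ (mem_ball_self (by positivity))))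
            hq.le
      _ = t * diam A := by field_simp

end IsSimilarityOf

theorem card_le_of_disjoint_similarities_meeting {A : Set ℂ} (hconv : Convex ℝ A)
    (hbdd : Bornology.IsBounded A) {a₀ : ℂ} {ρ : ℝ} (hρ : 0 < ρ) (hball : ball a₀ ρ ⊆ A)
    {τ : ℝ} (hτ : 0 < τ) {ι : Type*} [Fintype ι] {U : Set ℂ} {r : ℝ} {V : ι → Set ℂ}
    {rv : ι → ℝ} (hU : IsSimilarityOf r A U) (hV : ∀ i, IsSimilarityOf (rv i) A (V i))
    (hrv : ∀ i, τ * r ≤ rv i) (hmeet : ∀ i, (V i ∩ U).Nonempty)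
    (hdisj : Pairwise (Disjoint on V)) :
    (Fintype.card ι : ℝ) ≤ ((diam A * (1 + τ) + ρ * τ) / (ρ * τ)) ^ 2 := by
  have hr := hU.1
  obtain ⟨u, hu⟩ := hU.exists_ball_subset hball
  have huU : u ∈ U := hu (mem_ball_self (by positivity))
  choose x hxV hxU using hmeet
  have hnear : ∀ i, ∃ c, ball c (ρ * (τ * r)) ⊆ V i ∧ dist c (x i) ≤ τ * r * diam A :=
    fun i => (hV i).exists_ball_subset_near hconv hbdd hρ hball (hxV i) (by positivity) (hrv i)
  choose c hcV hcx using hnear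
  have hcu : ∀ i, dist (c i) u ≤ diam A * (1 + τ) * r := fun i => by
    linarith [dist_triangle (c i) (x i) u, hcx i, hU.dist_le hbdd (hxU i) huU]
  have hcard := card_le_of_pairwise_disjoint_ball (by positivity) (by positivity) hcu
    fun i j hij => (hdisj hij).mono (hcV i) (hcV j)
  rwa [Complex.finrank_real_complex, ← mul_assoc, ← add_mul, mul_div_mul_right _ _ hr.ne']
    at hcard

theorem stmt_6 (A : Set ℂ) (hA : IsConvexDisk A) (ε' : ℝ) (hε' : 0 < ε') :
    ∃ n₀ : ℕ, ∀ n ≥ n₀, ∀ (U₁ U₂ : Set ℂ) (r₁ r₂ : ℝ)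
      (V : Fin n → Set ℂ) (rv : Fin n → ℝ),
      IsSimilarityOf r₁ A U₁ → IsSimilarityOf r₂ A U₂ →
      (∀ i, IsSimilarityOf (rv i) A (V i)) →
      (∀ i, (V i ∩ U₁).Nonempty ∧ (V i ∩ U₂).Nonempty) →
      (∀ i j, i ≠ j → Disjoint (V i) (V j)) →
      setDist U₁ U₂ < ε' * min r₁ r₂ := by
  obtain ⟨a₀, ρ, hρ, hball⟩ := hA.exists_ball_subset
  have hD := hA.diam_pos
  have hbdd := hA.2.1.isBounded
  set τ := ε' / diam A
  have hτ : 0 < τ := div_pos hε' hD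
  obtain ⟨n₀, hn₀⟩ := exists_nat_gt (((diam A * (1 + τ) + ρ * τ) / (ρ * τ)) ^ 2)
  refine ⟨n₀, fun n hn U₁ U₂ r₁ r₂ V rv h₁ h₂ hV hmeet hdisj => ?_⟩
  by_contra! hfar
  have hrv : ∀ i, τ * min r₁ r₂ ≤ rv i := fun i => by
    obtain ⟨p, hpV, hpU⟩ := (hmeet i).1
    obtain ⟨q, hqV, hqU⟩ := (hmeet i).2
    have hdiam := (hV i).dist_le hbdd hpV hqV
    rw [div_mul_eq_mul_div, div_le_iff₀ hD]
    exact hfar.trans ((setDist_le_dist hpU hqU).trans hdiam)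
  have hcard : (n : ℝ) ≤ ((diam A * (1 + τ) + ρ * τ) / (ρ * τ)) ^ 2 := by
    rw [← Fintype.card_fin n]
    rcases min_choice r₁ r₂ with hmin | hmin <;> rw [hmin] at hrv
    · exact card_le_of_disjoint_similarities_meeting hA.1 hbdd hρ hball hτ h₁ hV
        hrv (fun i => (hmeet i).1) fun i j => hdisj i j
    · exact card_le_of_disjoint_similarities_meeting hA.1 hbdd hρ hball hτ h₂ hV
        hrv (fun i => (hmeet i).2) fun i j => hdisj i j
  have hn' : (n₀ : ℝ) ≤ n := by exact_mod_cast hn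
  linarith
end
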